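/- If p, q → 0 in such a way that p = o(q^{2^d}), then for bootstrap percolation on ℤ^d with threshold r = d, the probability that the origin is eventually occupied tends to 0. More precisely: with probability tending to 1 there exist integers M < 0 < N such that no site of the box {0,1}^{d-1} × [M,N] is initially occupied while every site of {0,1}^{d-1} × {M} and {0,1}^{d-1} × {N} is closed; on this event the origin never becomes occupied. -/

import Mathlib

/-
The origin lies in the tube `{0,1}^{d-1} × [M, N]`. A site strictly inside the tube has, in each
of the `d - 1` transversal directions, exactly one neighbour outside the tube, so with threshold
`d` it needs an occupied neighbour inside the tube. Hence if the tube contains no initially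
occupied site and its two end slabs are closed, induction on time shows that it stays empty.

A slab `{0,1}^{d-1} × {z}` is entirely closed with probability `a = q^(2^(d-1))`, independently
for different `z`. Among the `K = ⌈a⁻²⌉` slabs on either side of the origin some slab is closed,
except with probability `(1 - a)^K ≤ exp (-1/a)`, while the box `{0,1}^{d-1} × [-K, K]` contains
an initially occupied site with probability at most `(2K + 1) 2^(d-1) p`, which tends to `0`
because `p = o(a²)`.
-/
open MeasureTheory Filter Topology

/-- Sites of the lattice `ℤ^d`. -/
abbrev SiteD (d : ℕ) := Fin d → ℤ

/-- Nearest-neighbor adjacency on `ℤ^d`: `‖u - v‖₁ = 1`. -/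
def AdjD {d : ℕ} (u v : SiteD d) : Prop := (∑ i, |u i - v i|) = 1

/-- The standard bootstrap rule with threshold `r`: at least `r` occupied neighbors. -/
def StdRule {d : ℕ} (r : ℕ) (occ : Set (SiteD d)) (x : SiteD d) : Prop :=
  ∃ T : Finset (SiteD d), r ≤ T.card ∧ ∀ y ∈ T, AdjD x y ∧ y ∈ occ

/-- Bootstrap dynamics for a rule `rule`, closed set `C`, initially occupied set `O`. -/
def occSeqD {d : ℕ} (rule : Set (SiteD d) → SiteD d → Prop)
    (C O : Set (SiteD d)) : ℕ → Set (SiteD d)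
  | 0 => O
  | t + 1 => occSeqD rule C O t ∪ {x | x ∉ C ∧ rule (occSeqD rule C O t) x}

/-- The blocked-tube event: there are `M < 0 < N` such that no site of the box
`{0,1}^{d-1} × [M,N]` is initially occupied while both end slabs
`{0,1}^{d-1} × {M}` and `{0,1}^{d-1} × {N}` are entirely closed.
States: `0` = closed, `1` = open and initially occupied, `2` = open unoccupied. -/
def TubeEvent (d : ℕ) (hd : 2 ≤ d) (σ : SiteD d → Fin 3) : Prop :=
  ∃ M N : ℤ, M < 0 ∧ 0 < N ∧
    (∀ x : SiteD d,
      ((∀ i : Fin d, (i : ℕ) < d - 1 → (x i = 0 ∨ x i = 1)) ∧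
        M ≤ x ⟨d - 1, by omega⟩ ∧ x ⟨d - 1, by omega⟩ ≤ N) → σ x ≠ 1) ∧
    (∀ x : SiteD d,
      ((∀ i : Fin d, (i : ℕ) < d - 1 → (x i = 0 ∨ x i = 1)) ∧
        (x ⟨d - 1, by omega⟩ = M ∨ x ⟨d - 1, by omega⟩ = N)) → σ x = 0)

open scoped ENNReal

lemma AdjD.exists_differ_by_one {d : ℕ} {x y : SiteD d} (h : AdjD x y) :
    ∃ i, (y i = x i + 1 ∨ y i = x i - 1) ∧ ∀ j ≠ i, y j = x j := by
  obtain ⟨i, hi⟩ : ∃ i, x i ≠ y i := by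
    by_contra! hxy
    simp [AdjD, hxy] at h
  have hsplit : |x i - y i| + ∑ j ∈ Finset.univ.erase i, |x j - y j| = 1 :=
    (Finset.add_sum_erase _ _ (Finset.mem_univ i)).trans h
  have hi1 : 1 ≤ |x i - y i| := Int.one_le_abs (sub_ne_zero.mpr hi)
  have hrest_nonneg : 0 ≤ ∑ j ∈ Finset.univ.erase i, |x j - y j| :=
    Finset.sum_nonneg fun j _ => abs_nonneg _
  have hrest : ∀ j ∈ Finset.univ.erase i, |x j - y j| = 0 :=
    (Finset.sum_eq_zero_iff_of_nonneg fun j _ => abs_nonneg _).mp (by omega)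
  refine ⟨i, ?_, fun j hj => ?_⟩
  · rcases abs_eq (zero_le_one' ℤ) |>.mp (show |x i - y i| = 1 by omega) with h | h <;> omega
  · have := abs_eq_zero.mp (hrest j (Finset.mem_erase.mpr ⟨hj, Finset.mem_univ j⟩))
    omega

def tube {d : ℕ} (l : Fin d) (M N : ℤ) : Set (SiteD d) :=
  {x | (∀ i ≠ l, x i = 0 ∨ x i = 1) ∧ M ≤ x l ∧ x l ≤ N}

lemma eq_update_of_adjD_of_notMem_tube {d : ℕ} {l : Fin d} {M N : ℤ} {x y : SiteD d}
    (hx : x ∈ tube l M N) (hxM : M < x l) (hxN : x l < N) (hxy : AdjD x y)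
    (hy : y ∉ tube l M N) :
    ∃ i ≠ l, y = Function.update x i (if x i = 0 then -1 else 2) := by
  obtain ⟨i, hyi, hy_eq⟩ := hxy.exists_differ_by_one
  have hil : i ≠ l := by
    rintro rfl
    refine hy ⟨fun j hj => hy_eq j hj ▸ hx.1 j hj, by omega, by omega⟩
  have hyi' : ¬ (y i = 0 ∨ y i = 1) := fun h01 =>
    hy ⟨fun j hj => if hji : j = i then hji ▸ h01 else hy_eq j hji ▸ hx.1 j hj,
      hy_eq l hil.symm ▸ hx.2⟩
  refine ⟨i, hil, funext fun j => ?_⟩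
  rcases eq_or_ne j i with rfl | hji
  · rcases hx.1 j hil with h | h <;> simp [h] at hyi' ⊢ <;> omega
  · simp [hji, hy_eq j hji]

lemma occSeqD_disjoint_tube {d r : ℕ} (hr : d ≤ r) {l : Fin d} {M N : ℤ}
    {C O : Set (SiteD d)} (hO : Disjoint O (tube l M N))
    (hC : ∀ x ∈ tube l M N, x l = M ∨ x l = N → x ∈ C) (t : ℕ) :
    Disjoint (occSeqD (StdRule r) C O t) (tube l M N) := by
  induction t with
  | zero => exact hO
  | succ t ih =>
    refine Set.disjoint_left.mpr fun x hx hxT => ?_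
    rcases hx with hx | ⟨hxC, T, hrT, hT⟩
    · exact Set.disjoint_left.mp ih hx hxT
    have hxM : M < x l := lt_of_le_of_ne hxT.2.1 fun h => hxC (hC x hxT (.inl h.symm))
    have hxN : x l < N := lt_of_le_of_ne hxT.2.2 fun h => hxC (hC x hxT (.inr h))
    have hTsub : T ⊆ (Finset.univ.erase l).image
        fun i => Function.update x i (if x i = 0 then -1 else 2) := by
      intro y hy
      obtain ⟨i, hil, rfl⟩ := eq_update_of_adjD_of_notMem_tube hxT hxM hxN (hT y hy).1
        (Set.disjoint_left.mp ih (hT y hy).2)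
      exact Finset.mem_image_of_mem _ (Finset.mem_erase.mpr ⟨hil, Finset.mem_univ i⟩)
    have hcard := (Finset.card_le_card hTsub).trans Finset.card_image_le
    rw [Finset.card_erase_of_mem (Finset.mem_univ l), Finset.card_univ, Fintype.card_fin] at hcard
    have hd : 0 < d := l.pos
    omega

lemma sum_prod_of_ne_const {ι β : Type*} [Fintype ι] [Fintype β] [DecidableEq ι] [DecidableEq β]
    {w : β → ℝ≥0∞} (hw : ∑ b, w b = 1) (b₀ : β) :
    ∑ c ∈ Finset.univ.erase (fun _ : ι => b₀), ∏ i, w (c i) = 1 - w b₀ ^ Fintype.card ι := by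
  have htotal : ∑ c : ι → β, ∏ i, w (c i) = 1 := by
    rw [← Fintype.prod_sum (fun _ b => w b), hw, Finset.prod_const_one]
  have hb₀ : w b₀ ≠ ⊤ := ne_top_of_le_ne_top ENNReal.one_ne_top
    (hw ▸ Finset.single_le_sum (fun b _ => zero_le) (Finset.mem_univ b₀))
  refine ENNReal.eq_sub_of_add_eq (ENNReal.pow_ne_top hb₀) ?_
  rw [← htotal, ← Finset.add_sum_erase _ _ (Finset.mem_univ fun _ => b₀), add_comm,
    Finset.prod_const, Finset.card_univ]

section ProductField

variable {α β ι Ω : Type*} [MeasurableSpace Ω]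

/-- Only the cylinder probabilities are prescribed and no measurability is assumed, so events
are estimated from above by finite unions of cylinders. -/
def IsProductField (ν : Measure Ω) (X : α → Ω → β) (w : β → ℝ≥0∞) : Prop :=
  ∀ (F : Finset α) (f : α → β), ν {ω | ∀ x ∈ F, X x ω = f x} = ∏ x ∈ F, w (f x)

variable {ν : Measure Ω} {X : α → Ω → β} {w : β → ℝ≥0∞}

lemma IsProductField.measure_eq (hX : IsProductField ν X w) (x : α) (b : β) :
    ν {ω | X x ω = b} = w b := by
  simpa using hX {x} fun _ => b

lemma IsProductField.measure_eq_prod_of_injective [Nonempty β] [Fintype ι]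
    (hX : IsProductField ν X w) {s : ι → α} (hs : Function.Injective s) (g : ι → β) :
    ν {ω | ∀ i, X (s i) ω = g i} = ∏ i, w (g i) := by
  let f : α → β := Function.extend s g fun _ => Classical.arbitrary β
  have hf : ∀ i, f (s i) = g i := hs.extend_apply g _
  have hset : {ω | ∀ i, X (s i) ω = g i} = {ω | ∀ x ∈ Finset.univ.map ⟨s, hs⟩, X x ω = f x} := by
    simp [hf]
  rw [hset, hX, Finset.prod_map]
  simp [hf]

lemma IsProductField.measure_mem_le_sum_prod [Nonempty β] [Fintype ι]
    (hX : IsProductField ν X w) {s : ι → α} (hs : Function.Injective s) (S : Finset (ι → β)) :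
    ν {ω | (fun i => X (s i) ω) ∈ S} ≤ ∑ g ∈ S, ∏ i, w (g i) := calc
  _ ≤ ν (⋃ g ∈ S, {ω | ∀ i, X (s i) ω = g i}) :=
    measure_mono fun ω hω => Set.mem_biUnion hω fun _ => rfl
  _ ≤ ∑ g ∈ S, ν {ω | ∀ i, X (s i) ω = g i} := measure_biUnion_finset_le _ _
  _ = ∑ g ∈ S, ∏ i, w (g i) := by
    simp only [hX.measure_eq_prod_of_injective hs]

lemma IsProductField.measure_forall_exists_ne_le [Nonempty β] {κ E : Type*} [Fintype κ]
    [Fintype E] [Fintype β] [DecidableEq β] (hX : IsProductField ν X w) (hw : ∑ b, w b = 1)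
    {s : κ → E → α} (hs : Function.Injective (Function.uncurry s)) (b₀ : β) :
    ν {ω | ∀ j, ∃ e, X (s j e) ω ≠ b₀} ≤ (1 - w b₀ ^ Fintype.card E) ^ Fintype.card κ := by
  classical
  let S : Finset (κ × E → β) := Finset.univ.filter fun g => ∀ j, ∃ e, g (j, e) ≠ b₀
  calc _ = ν {ω | (fun i => X (Function.uncurry s i) ω) ∈ S} := by simp [S]
    _ ≤ ∑ g ∈ S, ∏ i, w (g i) := hX.measure_mem_le_sum_prod hs S
    _ = ∑ h ∈ Fintype.piFinset fun _ : κ => Finset.univ.erase fun _ : E => b₀,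
          ∏ j, ∏ e, w (h j e) := by
      refine Finset.sum_equiv (Equiv.curry κ E β) (fun g => ?_)
        (fun g _ => Fintype.prod_prod_type _)
      simp [S, Function.ne_iff]
    _ = ∏ _j : κ, ∑ c ∈ Finset.univ.erase fun _ : E => b₀, ∏ e, w (c e) :=
      (Finset.prod_univ_sum (fun _ => Finset.univ.erase fun _ : E => b₀)
        fun _ c => ∏ e, w (c e)).symm
    _ = _ := by rw [sum_prod_of_ne_const hw, Finset.prod_const, Finset.card_univ]

end ProductField

abbrev CrossSection {d : ℕ} (l : Fin d) : Type := {i // i ≠ l} → Fin 2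

def tubeSite {d : ℕ} (l : Fin d) (ε : CrossSection l) (z : ℤ) : SiteD d :=
  fun i => if h : i = l then z else ((ε ⟨i, h⟩ : ℕ) : ℤ)

section TubeSite

variable {d : ℕ} {l : Fin d}

@[simp]
lemma tubeSite_apply_self (ε : CrossSection l) (z : ℤ) : tubeSite l ε z l = z := by
  simp [tubeSite]

lemma tubeSite_inj {ε ε' : CrossSection l} {z z' : ℤ} :
    tubeSite l ε z = tubeSite l ε' z' ↔ ε = ε' ∧ z = z' := by
  refine ⟨fun h => ⟨funext fun i => ?_, by simpa using congrFun h l⟩, fun h => h.1 ▸ h.2 ▸ rfl⟩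
  have := congrFun h i
  simp only [tubeSite, dif_neg i.2] at this
  exact Fin.ext (by exact_mod_cast this)

lemma exists_tubeSite_eq {x : SiteD d} (hx : ∀ i ≠ l, x i = 0 ∨ x i = 1) :
    ∃ ε, tubeSite l ε (x l) = x := by
  refine ⟨fun i => if x i = 0 then 0 else 1, funext fun i => ?_⟩
  by_cases hi : i = l
  · subst hi; simp
  · rcases hx i hi with h | h <;> simp [tubeSite, hi, h]

lemma card_crossSection : Fintype.card (CrossSection l) = 2 ^ (d - 1) := by
  simp

end TubeSite

lemma tubeEvent_iff {d : ℕ} (hd : 2 ≤ d) {l : Fin d} (hl : (l : ℕ) = d - 1)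
    (σ : SiteD d → Fin 3) :
    TubeEvent d hd σ ↔ ∃ M N : ℤ, M < 0 ∧ 0 < N ∧
      (∀ x ∈ tube l M N, σ x ≠ 1) ∧ ∀ x ∈ tube l M N, x l = M ∨ x l = N → σ x = 0 := by
  have hd' : d - 1 < d := by omega
  obtain rfl : l = ⟨d - 1, hd'⟩ := Fin.ext hl
  have hlt : ∀ i : Fin d, (i : ℕ) < d - 1 ↔ i ≠ ⟨d - 1, hd'⟩ := fun i => by
    rw [Ne, Fin.ext_iff]
    omega
  simp only [TubeEvent, tube, hlt, Set.mem_ofPred_eq, and_imp]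
  refine exists₂_congr fun M N => and_congr_right fun hM => and_congr_right fun hN =>
    and_congr_right fun _ => forall₂_congr fun x _ =>
      ⟨fun h _ _ => h, fun h hend => h (by omega) (by omega) hend⟩

lemma TubeEvent.zero_notMem_occSeqD {d : ℕ} {hd : 2 ≤ d} {σ : SiteD d → Fin 3}
    (h : TubeEvent d hd σ) (t : ℕ) :
    (0 : SiteD d) ∉ occSeqD (StdRule d) {x | σ x = 0} {x | σ x = 1} t := by
  obtain ⟨M, N, hM, hN, hopen, hclosed⟩ := (tubeEvent_iff hd (l := ⟨d - 1, by omega⟩) rfl σ).mp h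
  have hdisj := occSeqD_disjoint_tube le_rfl
    (Set.disjoint_left.mpr fun x hx hxT => hopen x hxT hx) hclosed t
  exact fun h0 => Set.disjoint_left.mp hdisj h0 ⟨fun _ _ => .inl rfl, hM.le, hN.le⟩

lemma tubeEvent_of_closed_slabs {d : ℕ} (hd : 2 ≤ d) {l : Fin d} (hl : (l : ℕ) = d - 1)
    {σ : SiteD d → Fin 3} {K : ℕ} {M N : ℤ} (hKM : -K ≤ M) (hM : M < 0) (hN : 0 < N)
    (hNK : N ≤ K) (hbox : ∀ z ∈ Finset.Icc (-K : ℤ) K, ∀ ε, σ (tubeSite l ε z) ≠ 1)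
    (hMc : ∀ ε, σ (tubeSite l ε M) = 0) (hNc : ∀ ε, σ (tubeSite l ε N) = 0) :
    TubeEvent d hd σ := by
  refine (tubeEvent_iff hd hl σ).mpr ⟨M, N, hM, hN, fun x hx => ?_, fun x hx hend => ?_⟩
  all_goals obtain ⟨ε, hε⟩ := exists_tubeSite_eq hx.1
  · rw [← hε]
    exact hbox _ (Finset.mem_Icc.mpr ⟨by linarith [hx.2.1], by linarith [hx.2.2]⟩) ε
  · rcases hend with h | h <;> rw [← hε, h]
    exacts [hMc ε, hNc ε]

noncomputable def pollutedWeight (p q : ℝ) (v : Fin 3) : ℝ≥0∞ :=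
  if v = 0 then ENNReal.ofReal q else if v = 1 then ENNReal.ofReal p else ENNReal.ofReal (1 - p - q)

lemma sum_pollutedWeight {p q : ℝ} (hp : 0 ≤ p) (hq : 0 ≤ q) (hpq : p + q ≤ 1) :
    ∑ v, pollutedWeight p q v = 1 := by
  simp only [Fin.sum_univ_three, pollutedWeight, Fin.reduceEq, if_true, if_false]
  rw [← ENNReal.ofReal_add hq hp, ← ENNReal.ofReal_add (by positivity) (by linarith)]
  ring_nf
  exact ENNReal.ofReal_one

section Estimate

variable {d : ℕ} {Ω : Type*} [MeasurableSpace Ω] {ν : Measure Ω} {X : SiteD d → Ω → Fin 3}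
  {p q : ℝ}

lemma measure_exists_occupied_le (hX : IsProductField ν X (pollutedWeight p q)) (l : Fin d)
    (K : ℕ) :
    ν {ω | ∃ z ∈ Finset.Icc (-K : ℤ) K, ∃ ε, X (tubeSite l ε z) ω = 1} ≤
      ENNReal.ofReal ((2 * K + 1) * 2 ^ (d - 1) * p) := by
  let box := Finset.Icc (-K : ℤ) K ×ˢ (Finset.univ : Finset (CrossSection l))
  have hbox : box.card = (2 * K + 1) * 2 ^ (d - 1) := by
    rw [Finset.card_product, Int.card_Icc, Finset.card_univ, card_crossSection]
    congr 1
    omega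
  calc _ ≤ ν (⋃ zε ∈ box, {ω | X (tubeSite l zε.2 zε.1) ω = 1}) :=
        measure_mono fun ω hω => by
          obtain ⟨z, hz, ε, h⟩ := hω
          exact Set.mem_biUnion (x := (z, ε)) (Finset.mem_product.mpr ⟨hz, Finset.mem_univ ε⟩) h
    _ ≤ ∑ zε ∈ box, ν {ω | X (tubeSite l zε.2 zε.1) ω = 1} := measure_biUnion_finset_le _ _
    _ = ENNReal.ofReal ((2 * K + 1) * 2 ^ (d - 1) * p) := by
      simp only [hX.measure_eq, pollutedWeight, Fin.reduceEq, if_true, if_false,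
        Finset.sum_const, hbox, nsmul_eq_mul]
      rw [ENNReal.ofReal_mul (by positivity)]
      norm_cast

lemma measure_forall_exists_not_closed_le (hX : IsProductField ν X (pollutedWeight p q))
    (hp : 0 ≤ p) (hq : 0 ≤ q) (hpq : p + q ≤ 1) (l : Fin d) {K : ℕ} {z : Fin K → ℤ}
    (hz : Function.Injective z) :
    ν {ω | ∀ j, ∃ ε, X (tubeSite l ε (z j)) ω ≠ 0} ≤
      ENNReal.ofReal ((1 - q ^ 2 ^ (d - 1)) ^ K) := by
  have hs : Function.Injective (Function.uncurry fun j ε => tubeSite l ε (z j)) :=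
    fun ⟨j, ε⟩ ⟨j', ε'⟩ h => by
      obtain ⟨rfl, h⟩ := tubeSite_inj.mp h
      exact Prod.ext (hz h) rfl
  refine (hX.measure_forall_exists_ne_le (sum_pollutedWeight hp hq hpq) hs 0).trans_eq ?_
  have hq1 : q ^ 2 ^ (d - 1) ≤ 1 := pow_le_one₀ hq (by linarith)
  simp only [pollutedWeight, if_true, card_crossSection, Fintype.card_fin]
  rw [← ENNReal.ofReal_pow hq, ← ENNReal.ofReal_one, ← ENNReal.ofReal_sub _ (by positivity),
    ENNReal.ofReal_pow (sub_nonneg.mpr hq1)]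

lemma measure_not_tubeEvent_le (hd : 2 ≤ d) (hX : IsProductField ν X (pollutedWeight p q))
    (hp : 0 ≤ p) (hq : 0 ≤ q) (hpq : p + q ≤ 1) (K : ℕ) :
    ν {ω | ¬ TubeEvent d hd fun x => X x ω} ≤
      ENNReal.ofReal ((2 * K + 1) * 2 ^ (d - 1) * p + 2 * (1 - q ^ 2 ^ (d - 1)) ^ K) := by
  set l : Fin d := ⟨d - 1, by omega⟩
  set occupied := {ω | ∃ z ∈ Finset.Icc (-K : ℤ) K, ∃ ε, X (tubeSite l ε z) ω = 1}
  set openBelow := {ω | ∀ j : Fin K, ∃ ε, X (tubeSite l ε (-(j + 1))) ω ≠ 0}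
  set openAbove := {ω | ∀ j : Fin K, ∃ ε, X (tubeSite l ε (j + 1)) ω ≠ 0}
  have hsub : {ω | ¬ TubeEvent d hd fun x => X x ω} ⊆ occupied ∪ openBelow ∪ openAbove := by
    intro ω hω
    simp only [Set.mem_union, occupied, openBelow, openAbove, Set.mem_ofPred_eq]
    by_contra! h
    obtain ⟨⟨hbox, ⟨j, hj⟩⟩, ⟨j', hj'⟩⟩ := h
    exact hω (tubeEvent_of_closed_slabs hd rfl (by omega) (by omega) (by omega) (by omega)
      hbox hj hj')
  have hslab : 0 ≤ (1 - q ^ 2 ^ (d - 1)) ^ K :=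
    pow_nonneg (sub_nonneg.mpr (pow_le_one₀ hq (by linarith))) K
  calc _ ≤ ν occupied + ν openBelow + ν openAbove :=
        (measure_mono hsub).trans <|
          (measure_union_le _ _).trans (by gcongr; exact measure_union_le _ _)
    _ ≤ ENNReal.ofReal ((2 * K + 1) * 2 ^ (d - 1) * p) +
          ENNReal.ofReal ((1 - q ^ 2 ^ (d - 1)) ^ K) +
          ENNReal.ofReal ((1 - q ^ 2 ^ (d - 1)) ^ K) := by
      gcongr
      · exact measure_exists_occupied_le hX l K
      · exact measure_forall_exists_not_closed_le hX hp hq hpq l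
          fun a b h => Fin.ext (by simp at h; omega)
      · exact measure_forall_exists_not_closed_le hX hp hq hpq l
          fun a b h => Fin.ext (by simp at h; omega)
    _ = _ := by
      rw [add_assoc, ← ENNReal.ofReal_add hslab hslab,
        ← ENNReal.ofReal_add (by positivity) (by positivity), ← two_mul]

end Estimate

section Asymptotics

variable {ι : Type*} {F : Filter ι} {a b : ι → ℝ}

lemma tendsto_natCeil_inv_sq_mul (hb0 : ∀ i, 0 ≤ b i) (hb : Tendsto b F (𝓝 0))
    (hab : b =o[F] fun i => a i ^ 2) :
    Tendsto (fun i => (⌈(a i ^ 2)⁻¹⌉₊ : ℝ) * b i) F (𝓝 0) := by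
  refine squeeze_zero (fun i => mul_nonneg (Nat.cast_nonneg _) (hb0 i)) (fun i => ?_)
    (by simpa using hab.tendsto_div_nhds_zero.add hb)
  calc (⌈(a i ^ 2)⁻¹⌉₊ : ℝ) * b i ≤ ((a i ^ 2)⁻¹ + 1) * b i :=
        mul_le_mul_of_nonneg_right (Nat.ceil_lt_add_one (by positivity)).le (hb0 i)
    _ = b i / a i ^ 2 + b i := by ring

lemma tendsto_one_sub_pow_natCeil_inv_sq (ha0 : ∀ i, 0 < a i) (ha1 : ∀ i, a i ≤ 1)
    (ha : Tendsto a F (𝓝 0)) :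
    Tendsto (fun i => (1 - a i) ^ ⌈(a i ^ 2)⁻¹⌉₊) F (𝓝 0) := by
  have hinv : Tendsto (fun i => (a i)⁻¹) F atTop :=
    tendsto_inv_nhdsGT_zero.comp (tendsto_nhdsWithin_iff.mpr ⟨ha, .of_forall ha0⟩)
  refine squeeze_zero (fun i => pow_nonneg (sub_nonneg.mpr (ha1 i)) _) (fun i => ?_)
    (Real.tendsto_exp_atBot.comp (tendsto_neg_atTop_atBot.comp hinv))
  have hK : (a i)⁻¹ ≤ ⌈(a i ^ 2)⁻¹⌉₊ * a i := calc
    (a i)⁻¹ = (a i ^ 2)⁻¹ * a i := by field_simp [(ha0 i).ne']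
    _ ≤ ⌈(a i ^ 2)⁻¹⌉₊ * a i := mul_le_mul_of_nonneg_right (Nat.le_ceil _) (ha0 i).le
  calc (1 - a i) ^ ⌈(a i ^ 2)⁻¹⌉₊ ≤ Real.exp (-a i) ^ ⌈(a i ^ 2)⁻¹⌉₊ :=
        pow_le_pow_left₀ (sub_nonneg.mpr (ha1 i)) (Real.one_sub_le_exp_neg _) _
    _ = Real.exp (-(⌈(a i ^ 2)⁻¹⌉₊ * a i)) := by rw [← Real.exp_nat_mul]; ring_nf
    _ ≤ Real.exp (-(a i)⁻¹) := Real.exp_le_exp.mpr (neg_le_neg hK)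

end Asymptotics

lemma tendsto_measure_not_tubeEvent {d : ℕ} (hd : 2 ≤ d) {Ω : Type*} [MeasurableSpace Ω]
    {μ : ℕ → Measure Ω} {state : ℕ → SiteD d → Ω → Fin 3} {p q : ℕ → ℝ}
    (hp0 : ∀ n, 0 ≤ p n) (hq0 : ∀ n, 0 < q n) (hpq : ∀ n, p n + q n ≤ 1)
    (hp : Tendsto p atTop (𝓝 0)) (hq : Tendsto q atTop (𝓝 0))
    (hlittle : p =o[atTop] fun n => q n ^ 2 ^ d)
    (hX : ∀ n, IsProductField (μ n) (state n) (pollutedWeight (p n) (q n))) :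
    Tendsto (fun n => μ n {ω | ¬ TubeEvent d hd fun x => state n x ω}) atTop (𝓝 0) := by
  set a : ℕ → ℝ := fun n => q n ^ 2 ^ (d - 1)
  have ha_sq : (fun n => a n ^ 2) = fun n => q n ^ 2 ^ d := funext fun n => by
    rw [← pow_mul, ← pow_succ, Nat.sub_add_cancel (by omega)]
  have ha : Tendsto a atTop (𝓝 0) := by
    simpa using hq.pow (2 ^ (d - 1))
  set K : ℕ → ℕ := fun n => ⌈(a n ^ 2)⁻¹⌉₊
  have hKp := tendsto_natCeil_inv_sq_mul hp0 hp (ha_sq ▸ hlittle)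
  have hslab := tendsto_one_sub_pow_natCeil_inv_sq (fun n => pow_pos (hq0 n) _)
    (fun n => pow_le_one₀ (hq0 n).le (by linarith [hpq n, hp0 n])) ha
  have hbound : Tendsto (fun n => (2 * K n + 1) * 2 ^ (d - 1) * p n + 2 * (1 - a n) ^ K n)
      atTop (𝓝 0) := by
    convert ((hKp.const_mul (2 * 2 ^ (d - 1))).add (hp.const_mul (2 ^ (d - 1)))).add
      (hslab.const_mul 2) using 1
    · ext n
      simp only [K, a]
      ring
    · simp
  refine tendsto_of_tendsto_of_tendsto_of_le_of_le tendsto_const_nhds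
    (by simpa using ENNReal.tendsto_ofReal hbound) (fun n => zero_le) fun n =>
      measure_not_tubeEvent_le hd (hX n) (hp0 n) (hq0 n).le (hpq n) (K n)

lemma tendsto_measure_one_of_tendsto_measure_compl {ι Ω : Type*} [MeasurableSpace Ω]
    {F : Filter ι} {μ : ι → Measure Ω} [∀ i, IsProbabilityMeasure (μ i)] {s : ι → Set Ω}
    (h : Tendsto (fun i => μ i (s i)ᶜ) F (𝓝 0)) : Tendsto (fun i => μ i (s i)) F (𝓝 1) := by
  have hlower : ∀ i, 1 - μ i (s i)ᶜ ≤ μ i (s i) := fun i => by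
    rw [tsub_le_iff_right, ← measure_univ (μ := μ i), ← Set.union_compl_self (s i)]
    exact measure_union_le _ _
  refine tendsto_of_tendsto_of_tendsto_of_le_of_le ?_ tendsto_const_nhds hlower
    fun _ => prob_le_one
  simpa using ENNReal.Tendsto.sub tendsto_const_nhds h (.inl ENNReal.one_ne_top)

/-- If `p, q → 0` with `p = o(q^(2^d))`, then for polluted bootstrap percolation on
`ℤ^d` with threshold `r = d`: with probability tending to `1` the blocked-tube event
occurs; on that event the origin never becomes occupied; and hence the probability
that the origin is eventually occupied tends to `0`. -/
theorem threshold_d_blocked {d : ℕ} (hd : 2 ≤ d)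
    {Ω : Type*} [MeasurableSpace Ω]
    (μ : ℕ → Measure Ω) (hμ : ∀ n, IsProbabilityMeasure (μ n))
    (state : ℕ → SiteD d → Ω → Fin 3)
    (p q : ℕ → ℝ)
    (hp0 : ∀ n, 0 ≤ p n) (hq0 : ∀ n, 0 < q n) (hpq : ∀ n, p n + q n ≤ 1)
    (hp : Tendsto p atTop (𝓝 0)) (hq : Tendsto q atTop (𝓝 0))
    (hlittle : p =o[atTop] fun n => q n ^ 2 ^ d)
    (hprod : ∀ n : ℕ, ∀ F : Finset (SiteD d), ∀ f : SiteD d → Fin 3,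
      μ n {ω | ∀ x ∈ F, state n x ω = f x} =
        ∏ x ∈ F,
          (if f x = 0 then ENNReal.ofReal (q n)
           else if f x = 1 then ENNReal.ofReal (p n)
           else ENNReal.ofReal (1 - p n - q n))) :
    Tendsto (fun n => μ n {ω | TubeEvent d hd (fun x => state n x ω)}) atTop (𝓝 1) ∧
    (∀ n : ℕ, ∀ ω : Ω, TubeEvent d hd (fun x => state n x ω) →
      ¬ ∃ t : ℕ, (0 : SiteD d) ∈
        occSeqD (StdRule d) {x | state n x ω = 0} {x | state n x ω = 1} t) ∧
    Tendsto (fun n => μ n {ω | ∃ t : ℕ, (0 : SiteD d) ∈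
        occSeqD (StdRule d) {x | state n x ω = 0} {x | state n x ω = 1} t})
      atTop (𝓝 0) := by
  have hblocked : ∀ n ω, TubeEvent d hd (fun x => state n x ω) → ¬ ∃ t : ℕ, (0 : SiteD d) ∈
      occSeqD (StdRule d) {x | state n x ω = 0} {x | state n x ω = 1} t :=
    fun n ω h ⟨t, ht⟩ => h.zero_notMem_occSeqD t ht
  have hbad := tendsto_measure_not_tubeEvent hd hp0 hq0 hpq hp hq hlittle hprod
  refine ⟨?_, hblocked, ?_⟩
  · have := hμ
    exact tendsto_measure_one_of_tendsto_measure_compl hbad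
  · exact tendsto_of_tendsto_of_tendsto_of_le_of_le tendsto_const_nhds hbad (fun _ => zero_le)
      fun n => measure_mono fun ω hω h => hblocked n ω h hω
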